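/- With the conditional mean c^opt over the interval of length Δ centered at x_i, the local squared error satisfies ∫_{x_i−Δ/2}^{x_i+Δ/2} (c^opt − β(x))² p(x) dx = (1/12)(β'(x_i))² p(x_i) Δ³ + o(Δ³) as Δ → 0. -/

import Mathlib

/-!
Write `I`, `J`, `K` for the integrals of `p`, `(β - β xᵢ) p` and `(β - β xᵢ)² p` over the
window. Expanding the square gives the variance identity: the error integral is `K - J² / I`.
Since `β x - β xᵢ = (x - xᵢ) · dslope β xᵢ x` with `dslope β xᵢ` continuous at `xᵢ`, every moment
`∫ (β - β xᵢ)ⁿ p` equals `β'(xᵢ)ⁿ p(xᵢ) ∫ (x - xᵢ)ⁿ + o(Δⁿ⁺¹)`. Hence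
`K = β'(xᵢ)² p(xᵢ) Δ³ / 12 + o(Δ³)` and `J = o(Δ²)`, while `I ≥ p(xᵢ) Δ / 2`, so `J² / I = o(Δ³)`.
-/

open MeasureTheory Filter Topology Asymptotics

open intervalIntegral

theorem abs_sub_center_le_of_mem_uIcc {x₀ Δ x : ℝ} (hx : x ∈ Set.uIcc (x₀ - Δ / 2) (x₀ + Δ / 2)) :
    |x - x₀| ≤ |Δ| / 2 := by
  rcases le_total 0 Δ with hΔ | hΔ
  · rw [Set.uIcc_of_le (by linarith)] at hx
    rw [abs_of_nonneg hΔ, abs_le]; constructor <;> linarith [hx.1, hx.2]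
  · rw [Set.uIcc_of_ge (by linarith)] at hx
    rw [abs_of_nonpos hΔ, abs_le]; constructor <;> linarith [hx.1, hx.2]

theorem eventually_centered_uIcc_subset {x₀ : ℝ} {s : Set ℝ} (hs : s ∈ 𝓝 x₀) :
    ∀ᶠ Δ in 𝓝 (0 : ℝ), Set.uIcc (x₀ - Δ / 2) (x₀ + Δ / 2) ⊆ s := by
  obtain ⟨ε, hε, hball⟩ := Metric.mem_nhds_iff.1 hs
  filter_upwards [Metric.ball_mem_nhds 0 hε] with Δ hΔ x hx
  rw [Metric.mem_ball, Real.dist_0_eq_abs] at hΔ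
  refine hball ?_
  rw [Metric.mem_ball, Real.dist_eq]
  linarith [abs_sub_center_le_of_mem_uIcc hx, abs_nonneg Δ]

theorem isLittleO_integral_centered {E : Type*} [NormedAddCommGroup E] [NormedSpace ℝ E]
    {f : ℝ → E} {x₀ : ℝ} {n : ℕ} (hf : f =o[𝓝 x₀] fun x => (x - x₀) ^ n) :
    (fun Δ => ∫ x in (x₀ - Δ / 2)..(x₀ + Δ / 2), f x) =o[𝓝 0] fun Δ => Δ ^ (n + 1) := by
  refine IsLittleO.of_bound fun c hc => ?_
  obtain ⟨ε, hε, hball⟩ := Metric.eventually_nhds_iff_ball.1 (hf.bound hc)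
  filter_upwards [Metric.ball_mem_nhds 0 hε] with Δ hΔ
  rw [Metric.mem_ball, Real.dist_0_eq_abs] at hΔ
  have hbound : ∀ x ∈ Set.uIoc (x₀ - Δ / 2) (x₀ + Δ / 2), ‖f x‖ ≤ c * |Δ| ^ n := by
    intro x hx
    have hx' := abs_sub_center_le_of_mem_uIcc (Set.uIoc_subset_uIcc hx)
    calc ‖f x‖ ≤ c * ‖(x - x₀) ^ n‖ :=
          hball x (by rw [Metric.mem_ball, Real.dist_eq]; linarith [abs_nonneg Δ])
      _ ≤ c * |Δ| ^ n := by
          rw [norm_pow, Real.norm_eq_abs]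
          have : |x - x₀| ≤ |Δ| := by linarith [abs_nonneg Δ]
          gcongr
  calc ‖∫ x in (x₀ - Δ / 2)..(x₀ + Δ / 2), f x‖
      ≤ c * |Δ| ^ n * |x₀ + Δ / 2 - (x₀ - Δ / 2)| := norm_integral_le_of_norm_le_const hbound
    _ = c * ‖Δ ^ (n + 1)‖ := by rw [norm_pow, Real.norm_eq_abs]; ring_nf

theorem integral_centered_sub_pow (x₀ Δ : ℝ) (n : ℕ) :
    ∫ x in (x₀ - Δ / 2)..(x₀ + Δ / 2), (x - x₀) ^ n
      = ((Δ / 2) ^ (n + 1) - (-(Δ / 2)) ^ (n + 1)) / (n + 1) := by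
  rw [integral_comp_sub_right (fun x => x ^ n), integral_pow]
  ring_nf

theorem isLittleO_integral_centered_sub_pow_mul {β p : ℝ → ℝ} {x₀ : ℝ} {s : Set ℝ} (n : ℕ)
    (hs : s ∈ 𝓝 x₀) (hβ : ContinuousOn β s) (hp : ContinuousOn p s)
    (hβ' : DifferentiableAt ℝ β x₀) :
    (fun Δ => (∫ x in (x₀ - Δ / 2)..(x₀ + Δ / 2), (β x - β x₀) ^ n * p x)
        - deriv β x₀ ^ n * p x₀ * ∫ x in (x₀ - Δ / 2)..(x₀ + Δ / 2), (x - x₀) ^ n)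
      =o[𝓝 0] fun Δ => Δ ^ (n + 1) := by
  set q := fun x => dslope β x₀ x ^ n * p x with hq
  have hβq : ∀ x, (β x - β x₀) ^ n * p x = (x - x₀) ^ n * q x := fun x => by
    rw [hq, ← sub_smul_dslope β x₀ x, smul_eq_mul, mul_pow, mul_assoc]
  have hqx₀ : q x₀ = deriv β x₀ ^ n * p x₀ := by simp only [q, dslope_same]
  have hqc : ContinuousAt q x₀ :=
    ((continuousAt_dslope_same.2 hβ').pow n).mul (hp.continuousAt hs)
  have hlocal : (fun x => (x - x₀) ^ n * (q x - q x₀)) =o[𝓝 x₀] fun x => (x - x₀) ^ n := by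
    simpa using (isBigO_refl (fun x => (x - x₀) ^ n) _).mul_isLittleO
      ((isLittleO_one_iff ℝ).2 (tendsto_sub_nhds_zero_iff.2 hqc.tendsto))
  refine (isLittleO_integral_centered hlocal).congr' ?_ EventuallyEq.rfl
  filter_upwards [eventually_centered_uIcc_subset hs] with Δ hΔ
  have hint : IntervalIntegrable (fun x => (x - x₀) ^ n * q x) volume
      (x₀ - Δ / 2) (x₀ + Δ / 2) := by
    simp_rw [← hβq]
    exact (((hβ.mono hΔ).sub continuousOn_const).pow n |>.mul (hp.mono hΔ)).intervalIntegrable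
  simp_rw [hβq, mul_sub, ← hqx₀]
  rw [integral_sub hint ((by fun_prop : Continuous fun x => (x - x₀) ^ n * q x₀)
    |>.intervalIntegrable _ _), intervalIntegral.integral_mul_const, mul_comm]

theorem eventually_mul_le_integral_centered {p : ℝ → ℝ} {x₀ c : ℝ} {s : Set ℝ} (hc : c < p x₀)
    (hs : s ∈ 𝓝 x₀) (hp : ContinuousOn p s) :
    ∀ᶠ Δ in 𝓝[>] 0, c * Δ ≤ ∫ x in (x₀ - Δ / 2)..(x₀ + Δ / 2), p x := by
  have hnear : s ∩ {x | c ≤ p x} ∈ 𝓝 x₀ :=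
    inter_mem hs ((hp.continuousAt hs).eventually (Ici_mem_nhds hc))
  filter_upwards [(eventually_centered_uIcc_subset hnear).filter_mono nhdsWithin_le_nhds,
    self_mem_nhdsWithin] with Δ hΔ (hΔpos : 0 < Δ)
  have hle : x₀ - Δ / 2 ≤ x₀ + Δ / 2 := by linarith
  calc c * Δ = ∫ _ in (x₀ - Δ / 2)..(x₀ + Δ / 2), c := by
        rw [intervalIntegral.integral_const, smul_eq_mul]; ring
    _ ≤ ∫ x in (x₀ - Δ / 2)..(x₀ + Δ / 2), p x :=
        integral_mono_on hle intervalIntegrable_const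
          ((hp.mono (hΔ.trans Set.inter_subset_left)).intervalIntegrable)
          fun x hx => (hΔ (Set.uIcc_of_le hle ▸ hx)).2

theorem integral_div_sub_sq_mul {β p : ℝ → ℝ} {a b : ℝ} (m : ℝ)
    (hp : IntervalIntegrable p volume a b)
    (hβp : IntervalIntegrable (fun x => β x * p x) volume a b)
    (hβ2p : IntervalIntegrable (fun x => β x ^ 2 * p x) volume a b)
    (hI : ∫ x in a..b, p x ≠ 0) :
    ∫ x in a..b, ((∫ y in a..b, β y * p y) / (∫ y in a..b, p y) - β x) ^ 2 * p x
      = (∫ x in a..b, (β x - m) ^ 2 * p x)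
        - (∫ x in a..b, (β x - m) * p x) ^ 2 / ∫ x in a..b, p x := by
  set I := ∫ x in a..b, p x
  set J := ∫ x in a..b, β x * p x
  set K := ∫ x in a..b, β x ^ 2 * p x
  have hlin : ∀ (f : ℝ → ℝ) (u v w : ℝ),
      (∀ x, f x = u * p x + v * (β x * p x) + w * (β x ^ 2 * p x)) →
      ∫ x in a..b, f x = u * I + v * J + w * K := by
    intro f u v w hf
    simp_rw [hf]
    rw [integral_add ((hp.const_mul u).add (hβp.const_mul v)) (hβ2p.const_mul w),
      integral_add (hp.const_mul u) (hβp.const_mul v)]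
    simp only [intervalIntegral.integral_const_mul, I, J, K]
  rw [hlin (fun x => (J / I - β x) ^ 2 * p x) ((J / I) ^ 2) (-2 * (J / I)) 1 fun x => by ring,
    hlin (fun x => (β x - m) ^ 2 * p x) (m ^ 2) (-2 * m) 1 fun x => by ring,
    hlin (fun x => (β x - m) * p x) (-m) 1 0 fun x => by ring]
  field_simp
  ring

theorem isLittleO_sq_div_of_mul_le {J I : ℝ → ℝ} {c : ℝ} (hc : 0 < c)
    (hJ : J =o[𝓝[>] 0] fun Δ => Δ ^ 2) (hI : ∀ᶠ Δ in 𝓝[>] 0, c * Δ ≤ I Δ) :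
    (fun Δ => J Δ ^ 2 / I Δ) =o[𝓝[>] 0] fun Δ => Δ ^ 3 := by
  have hIinv : (fun Δ => (I Δ)⁻¹) =O[𝓝[>] 0] fun Δ => Δ⁻¹ := by
    refine IsBigO.inv_rev (IsBigO.of_bound c⁻¹ ?_) ?_
    · filter_upwards [hI, self_mem_nhdsWithin] with Δ hΔ (hΔpos : 0 < Δ)
      rw [Real.norm_eq_abs, Real.norm_eq_abs, abs_of_pos hΔpos, abs_of_pos (by nlinarith),
        inv_mul_eq_div, le_div_iff₀ hc, mul_comm]
      exact hΔ
    · filter_upwards [self_mem_nhdsWithin] with Δ (hΔpos : 0 < Δ) h using absurd h hΔpos.ne'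
  refine ((hJ.pow two_pos).mul_isBigO hIinv).congr' (.of_forall fun Δ => ?_) ?_
  · exact (div_eq_mul_inv _ _).symm
  · filter_upwards [self_mem_nhdsWithin] with Δ (hΔpos : 0 < Δ)
    field_simp

theorem stmt8_general (xi : ℝ) (β p : ℝ → ℝ) (r : ℝ) (hr : 0 < r)
    (hβ : ContDiffOn ℝ 2 β (Set.Ioo (xi - r) (xi + r)))
    (hp : ContDiffOn ℝ 1 p (Set.Ioo (xi - r) (xi + r)))
    (hppos : 0 < p xi)
    (copt : ℝ → ℝ)
    (hcopt : ∀ Δ : ℝ, copt Δ =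
      (∫ x in (xi - Δ / 2)..(xi + Δ / 2), β x * p x) /
      (∫ x in (xi - Δ / 2)..(xi + Δ / 2), p x)) :
    (fun Δ : ℝ =>
        (∫ x in (xi - Δ / 2)..(xi + Δ / 2), (copt Δ - β x) ^ 2 * p x)
          - (1 / 12) * (deriv β xi) ^ 2 * p xi * Δ ^ 3)
      =o[𝓝[>] (0 : ℝ)] (fun Δ : ℝ => Δ ^ 3) := by
  have hs : Set.Ioo (xi - r) (xi + r) ∈ 𝓝 xi := Ioo_mem_nhds (by linarith) (by linarith)
  have hβd : DifferentiableAt ℝ β xi := (hβ.contDiffAt hs).differentiableAt (by norm_num)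
  have hmoment (n : ℕ) := (isLittleO_integral_centered_sub_pow_mul n hs hβ.continuousOn
    hp.continuousOn hβd).mono (nhdsWithin_le_nhds (s := Set.Ioi 0))
  have hIge := eventually_mul_le_integral_centered (half_lt_self hppos) hs hp.continuousOn
  have hJ : (fun Δ => ∫ x in (xi - Δ / 2)..(xi + Δ / 2), (β x - β xi) * p x)
      =o[𝓝[>] 0] fun Δ => Δ ^ 2 :=
    (hmoment 1).congr' (.of_forall fun Δ => by
      dsimp only; rw [integral_centered_sub_pow]; simp only [pow_one]; ring) .rfl
  refine ((hmoment 2).sub (isLittleO_sq_div_of_mul_le (half_pos hppos) hJ hIge)).congr' ?_ .rfl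
  filter_upwards [(eventually_centered_uIcc_subset hs).filter_mono nhdsWithin_le_nhds, hIge,
    self_mem_nhdsWithin] with Δ hΔs hIΔ (hΔpos : 0 < Δ)
  have hβc := hβ.continuousOn.mono hΔs
  have hpc := hp.continuousOn.mono hΔs
  rw [hcopt, integral_div_sub_sq_mul (β xi) hpc.intervalIntegrable
    (hβc.mul hpc).intervalIntegrable ((hβc.pow 2).mul hpc).intervalIntegrable (by nlinarith),
    integral_centered_sub_pow]
  ring

/-- With the conditional mean `cᵒᵖᵗ(Δ)` over the interval of length `Δ` centered
at `xᵢ`, the local squared error equals `(1/12)(β'(xᵢ))² p(xᵢ) Δ³ + o(Δ³)` as `Δ → 0⁺`. -/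
theorem stmt8 (xi : ℝ) (β p : ℝ → ℝ) (r : ℝ) (hr : 0 < r)
    (hβ : ContDiffOn ℝ 2 β (Set.Ioo (xi - r) (xi + r)))
    (hp : ContDiffOn ℝ 1 p (Set.Ioo (xi - r) (xi + r)))
    (hppos : 0 < p xi) (hpnn : 0 ≤ p)
    (copt : ℝ → ℝ)
    (hcopt : ∀ Δ : ℝ, copt Δ =
      (∫ x in (xi - Δ / 2)..(xi + Δ / 2), β x * p x) /
      (∫ x in (xi - Δ / 2)..(xi + Δ / 2), p x)) :
    (fun Δ : ℝ =>
        (∫ x in (xi - Δ / 2)..(xi + Δ / 2), (copt Δ - β x) ^ 2 * p x)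
          - (1 / 12) * (deriv β xi) ^ 2 * p xi * Δ ^ 3)
      =o[𝓝[>] (0 : ℝ)] (fun Δ : ℝ => Δ ^ 3) :=
  stmt8_general xi β p r hr hβ hp hppos copt hcopt
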